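/- Let n ≥ 2 and a > 0, and let 0 < m ≤ δ. There is a constant C, depending only on n, a, m and δ, such that for every ε ∈ (0,1) and every x in the closed upper half-space with m ≤ x_n ≤ δ, one has ∫_{ { y : y' ∈ ℝ^{n−1}, 0 < y_n < δ } } g_ε(x,y) dy ≤ C. -/
import Mathlib


open MeasureTheory

/-- The kernel `g_ε(x,y) = yₙ^{a+2} (ε(1−ε))^{(a+2)/2} (|x−y|² + 4ε xₙ yₙ)^{−(a+n+2)/2}`,
the `n`-th coordinate being the coordinate `i`. -/
noncomputable def gker {n : ℕ} (a : ℝ) (i : Fin n) (ε : ℝ)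
    (x y : EuclideanSpace ℝ (Fin n)) : ℝ :=
  (y i) ^ (a + 2) * (ε * (1 - ε)) ^ ((a + 2) / 2) *
    (‖x - y‖ ^ 2 + 4 * ε * x i * y i) ^ (-(a + (n : ℝ) + 2) / 2)

lemma my_abs_coord_le_norm {n : ℕ} (v : EuclideanSpace ℝ (Fin n)) (i : Fin n) :
    |v i| ≤ ‖v‖ := by
  rw [EuclideanSpace.norm_eq, ← Real.sqrt_sq (abs_nonneg (v i))]
  apply Real.sqrt_le_sqrt
  calc |v i| ^ 2 = ‖v i‖ ^ 2 := by rw [Real.norm_eq_abs]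
    _ ≤ ∑ j, ‖v j‖ ^ 2 := Finset.single_le_sum (f := fun j => ‖v j‖ ^ 2)
        (fun j _ => sq_nonneg _) (Finset.mem_univ i)

lemma my_rpow_split {A B s t : ℝ} (hA : 0 < A) (hB : 0 < B) (hs : 0 ≤ s) (ht : 0 ≤ t) :
    (A + B) ^ (-(s + t)) ≤ A ^ (-s) * B ^ (-t) := by
  have hAB : (0:ℝ) < A + B := by linarith
  rw [Real.rpow_neg hAB.le, Real.rpow_neg hA.le, Real.rpow_neg hB.le, ← mul_inv,
    Real.rpow_add hAB]
  have h1 : A ^ s * B ^ t ≤ (A + B) ^ s * (A + B) ^ t :=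
    mul_le_mul (Real.rpow_le_rpow hA.le (by linarith) hs)
      (Real.rpow_le_rpow hB.le (by linarith) ht)
      (Real.rpow_nonneg hB.le t) (Real.rpow_nonneg hAB.le s)
  exact inv_anti₀ (by positivity) h1

lemma my_integrable_sq_add {n : ℕ} {lam p : ℝ} (hlam : 0 < lam) (hp : (n : ℝ) < 2 * p) :
    Integrable (fun z : EuclideanSpace ℝ (Fin n) => (‖z‖ ^ 2 + lam) ^ (-p)) := by
  have hp0 : 0 < p := by
    have : (0:ℝ) ≤ (n : ℝ) := Nat.cast_nonneg n
    linarith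
  have hfin : (Module.finrank ℝ (EuclideanSpace ℝ (Fin n)) : ℝ) < 2 * p := by
    rw [finrank_euclideanSpace_fin]; exact hp
  have base := integrable_rpow_neg_one_add_norm_sq
    (μ := (volume : Measure (EuclideanSpace ℝ (Fin n)))) hfin
  simp only [show -(2*p)/2 = -p by ring] at base
  have hmin : 0 < min lam 1 := lt_min hlam one_pos
  refine (base.const_mul ((min lam 1) ^ (-p))).mono' ?_ (Filter.Eventually.of_forall fun z => ?_)
  · apply Measurable.aestronglyMeasurable; fun_prop
  · rw [Real.norm_eq_abs, abs_of_nonneg (Real.rpow_nonneg (by positivity) _)]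
    have h1 : min lam 1 * (1 + ‖z‖ ^ 2) ≤ ‖z‖ ^ 2 + lam := by
      have h2 := min_le_left lam 1
      have h3 := min_le_right lam 1
      nlinarith [sq_nonneg ‖z‖]
    calc (‖z‖ ^ 2 + lam) ^ (-p) ≤ (min lam 1 * (1 + ‖z‖ ^ 2)) ^ (-p) :=
          Real.rpow_le_rpow_of_nonpos (by positivity) h1 (by linarith)
      _ = (min lam 1) ^ (-p) * ((1:ℝ) + ‖z‖ ^ 2) ^ (-p) :=
          Real.mul_rpow hmin.le (by positivity)

lemma my_integral_sq_add {n : ℕ} {lam p : ℝ} (hlam : 0 < lam) :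
    (∫ z : EuclideanSpace ℝ (Fin n), (‖z‖ ^ 2 + lam) ^ (-p)) =
      lam ^ ((n : ℝ) / 2 - p) * ∫ z : EuclideanSpace ℝ (Fin n), (‖z‖ ^ 2 + 1) ^ (-p) := by
  have key := MeasureTheory.Measure.integral_comp_smul_of_nonneg
    (μ := (volume : Measure (EuclideanSpace ℝ (Fin n))))
    (fun z => (‖z‖ ^ 2 + lam) ^ (-p)) (Real.sqrt lam) (hR := Real.sqrt_nonneg lam)
  simp only [norm_smul, Real.norm_eq_abs, abs_of_nonneg (Real.sqrt_nonneg lam), mul_pow,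
    Real.sq_sqrt hlam.le, finrank_euclideanSpace_fin, smul_eq_mul] at key
  have h1 : ∀ z : EuclideanSpace ℝ (Fin n),
      (lam * ‖z‖ ^ 2 + lam) ^ (-p) = lam ^ (-p) * (‖z‖ ^ 2 + 1) ^ (-p) := by
    intro z
    rw [← Real.mul_rpow hlam.le (by positivity)]
    ring_nf
  simp only [h1] at key
  rw [MeasureTheory.integral_const_mul] at key
  have hs : Real.sqrt lam ^ n = lam ^ ((n : ℝ) / 2) := by
    rw [Real.sqrt_eq_rpow, ← Real.rpow_natCast (lam ^ ((1:ℝ)/2)) n, ← Real.rpow_mul hlam.le]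
    congr 1; ring
  have hne : (Real.sqrt lam ^ n : ℝ) ≠ 0 := by positivity
  have h2 : (∫ z : EuclideanSpace ℝ (Fin n), (‖z‖ ^ 2 + lam) ^ (-p)) =
      Real.sqrt lam ^ n * (lam ^ (-p) * ∫ z : EuclideanSpace ℝ (Fin n), (‖z‖ ^ 2 + 1) ^ (-p)) := by
    rw [key]
    field_simp
  rw [h2, hs, show lam ^ ((n:ℝ)/2) * (lam ^ (-p) * ∫ z : EuclideanSpace ℝ (Fin n), (‖z‖ ^ 2 + 1) ^ (-p))
      = (lam ^ ((n:ℝ)/2) * lam ^ (-p)) * ∫ z : EuclideanSpace ℝ (Fin n), (‖z‖ ^ 2 + 1) ^ (-p) from by ring,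
    ← Real.rpow_add hlam, sub_eq_add_neg]


lemma my_mul_le_mul3 {a b c a' b' c' : ℝ} (h1 : a ≤ a') (h2 : b ≤ b') (h3 : c ≤ c')
    (hb : 0 ≤ b) (hc : 0 ≤ c) (ha' : 0 ≤ a') (hb' : 0 ≤ b') : a*b*c ≤ a'*b'*c' :=
  mul_le_mul (mul_le_mul h1 h2 hb ha') h3 hc (mul_nonneg ha' hb')

lemma my_mul_le_mul4 {a b c d a' b' c' d' : ℝ} (h1 : a ≤ a') (h2 : b ≤ b') (h3 : c ≤ c')
    (h4 : d ≤ d') (hb : 0 ≤ b) (hc : 0 ≤ c) (hd : 0 ≤ d)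
    (ha' : 0 ≤ a') (hb' : 0 ≤ b') (hc' : 0 ≤ c') : a*b*c*d ≤ a'*b'*c'*d' :=
  mul_le_mul (my_mul_le_mul3 h1 h2 h3 hb hc ha' hb') h4 hd
    (by positivity)


set_option maxHeartbeats 1000000 in
/-- For `n ≥ 2`, `a > 0` and `0 < m ≤ δ` there is `C = C(n,a,m,δ)` such
that for every `ε ∈ (0,1)` and every `x` in the closed upper half-space with `m ≤ xₙ ≤ δ`,
`∫_{{y : 0 < yₙ < δ}} g_ε(x,y) dy ≤ C`. -/
theorem stmt_10 (n : ℕ) (hn : 2 ≤ n) (a : ℝ) (ha : 0 < a) (m δ : ℝ)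
    (hm : 0 < m) (hmδ : m ≤ δ) :
    ∃ C : ℝ, 0 < C ∧
      ∀ ε ∈ Set.Ioo (0 : ℝ) 1, ∀ x : EuclideanSpace ℝ (Fin n),
        m ≤ x ⟨n - 1, by omega⟩ → x ⟨n - 1, by omega⟩ ≤ δ →
        IntegrableOn (fun y => gker a (⟨n - 1, by omega⟩ : Fin n) ε x y)
          {y : EuclideanSpace ℝ (Fin n) | 0 < y ⟨n - 1, by omega⟩ ∧ y ⟨n - 1, by omega⟩ < δ}
          volume ∧
        (∫ y in {y : EuclideanSpace ℝ (Fin n) |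
            0 < y ⟨n - 1, by omega⟩ ∧ y ⟨n - 1, by omega⟩ < δ},
          gker a (⟨n - 1, by omega⟩ : Fin n) ε x y) ≤ C := by
  have hδ0 : 0 < δ := lt_of_lt_of_le hm hmδ
  have hncast : (2:ℝ) ≤ (n:ℝ) := by exact_mod_cast hn
  set i : Fin n := ⟨n - 1, by omega⟩ with hidef
  set p : ℝ := (a + (n:ℝ) + 2) / 2 with hpdef
  set q : ℝ := (n:ℝ) + 1/2 with hqdef
  set θ : ℝ := (a + 2)/2 - 1/4 with hθdef
  have hθ0 : 0 < θ := by rw [hθdef]; linarith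
  have hp0 : 0 < p := by rw [hpdef]; linarith
  have hq0 : 0 < q := by rw [hqdef]; linarith
  have hpθq : p = q/2 + θ := by rw [hpdef, hqdef, hθdef]; push_cast; ring
  have hqn : (Module.finrank ℝ (EuclideanSpace ℝ (Fin n)) : ℝ) < q := by
    rw [finrank_euclideanSpace_fin, hqdef]; linarith
  have h2p : (n:ℝ) < 2 * p := by rw [hpdef]; linarith
  set J : ℝ := ∫ z : EuclideanSpace ℝ (Fin n), (‖z‖^2 + 1) ^ (-p) with hJdef
  set K : ℝ := ∫ z : EuclideanSpace ℝ (Fin n), (1 + ‖z‖) ^ (-q) with hKdef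
  have hJ0 : 0 ≤ J := integral_nonneg fun z => Real.rpow_nonneg (by positivity) _
  have hK0 : 0 ≤ K := integral_nonneg fun z => Real.rpow_nonneg (by positivity) _
  set CA : ℝ := δ ^ ((a+2)/2 + 1/4) * (4*m) ^ (-θ) * (1+2/m) ^ q with hCAdef
  have hCA0 : 0 ≤ CA := by rw [hCAdef]; positivity
  refine ⟨CA * K + δ^(a+2) * (2*m^2) ^ (-((a+2)/2)) * J + 1, ?_, ?_⟩
  · have h1 : 0 ≤ CA * K := mul_nonneg hCA0 hK0
    have h2 : 0 ≤ δ^(a+2) * (2*m^2) ^ (-((a+2)/2)) * J :=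
      mul_nonneg (mul_nonneg (by positivity) (by positivity)) hJ0
    linarith
  rintro ε ⟨hε0, hε1⟩ x hxm hxδ
  have hxm' : m ≤ x i := hxm
  have hxδ' : x i ≤ δ := hxδ
  have hx0 : 0 < x i := lt_of_lt_of_le hm hxm'
  set lam : ℝ := 2 * ε * m^2 with hlamdef
  have hlam0 : 0 < lam := by rw [hlamdef]; positivity
  set CB : ℝ := δ^(a+2) * ε^((a+2)/2) with hCBdef
  have hCB0 : 0 ≤ CB := by rw [hCBdef]; positivity
  set F : EuclideanSpace ℝ (Fin n) → ℝ :=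
    fun y => CA * (1 + ‖y - x‖) ^ (-q) + CB * (‖y - x‖^2 + lam) ^ (-p) with hFdef
  have hFnonneg : ∀ y, 0 ≤ F y := fun y =>
    add_nonneg (mul_nonneg hCA0 (Real.rpow_nonneg (by positivity) _))
      (mul_nonneg hCB0 (Real.rpow_nonneg (by positivity) _))
  -- pointwise bound
  have key : ∀ y : EuclideanSpace ℝ (Fin n), 0 < y i → y i < δ → gker a i ε x y ≤ F y := by
    intro y hy0 hyδ
    have hB0 : (0:ℝ) < 4 * ε * x i * y i := by positivity
    have hxy : ‖x - y‖ = ‖y - x‖ := norm_sub_rev x y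
    have hmid : (ε * (1 - ε)) ^ ((a+2)/2) ≤ ε ^ ((a+2)/2) := by
      rw [Real.mul_rpow hε0.le (by linarith)]
      exact mul_le_of_le_one_right (Real.rpow_nonneg hε0.le _)
        (Real.rpow_le_one (by linarith) (by linarith) (by linarith))
    have hexp : -(a + (n:ℝ) + 2) / 2 = -p := by rw [hpdef]; ring
    have hεε0 : (0:ℝ) ≤ ε * (1 - ε) := by nlinarith
    have hbase0 : (0:ℝ) ≤ ‖y - x‖^2 + 4*ε*x i*y i := add_nonneg (by positivity) hB0.le
    simp only [gker, hexp, hxy, hFdef]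
    by_cases hcase : ‖y - x‖ < m / 2
    · -- near: y i > m/2
      have hcoord : |x i - y i| ≤ ‖x - y‖ := by
        have h := my_abs_coord_le_norm (x - y) i
        simpa using h
      rw [hxy] at hcoord
      have habs := abs_lt.mp (lt_of_le_of_lt hcoord hcase)
      have hyn : m/2 < y i := by linarith [habs.1]
      have hBlam : lam ≤ 4 * ε * x i * y i := by
        rw [hlamdef]
        nlinarith [mul_nonneg (mul_nonneg (by positivity : (0:ℝ) ≤ 4*ε) hy0.le)
            (sub_nonneg.mpr hxm'),
          mul_nonneg (mul_nonneg (by positivity : (0:ℝ) ≤ 4*ε) hm.le)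
            (by linarith : (0:ℝ) ≤ y i - m/2)]
      have h3 : (‖y - x‖^2 + 4 * ε * x i * y i) ^ (-p) ≤ (‖y - x‖^2 + lam) ^ (-p) :=
        Real.rpow_le_rpow_of_nonpos (by positivity) (by linarith) (by linarith)
      have hterm : (y i)^(a+2) * (ε*(1-ε))^((a+2)/2) * (‖y - x‖^2 + 4*ε*x i*y i)^(-p)
          ≤ CB * (‖y - x‖^2 + lam) ^ (-p) := by
        rw [hCBdef]
        exact my_mul_le_mul3 (Real.rpow_le_rpow hy0.le hyδ.le (by linarith)) hmid h3
          (Real.rpow_nonneg hεε0 _) (Real.rpow_nonneg hbase0 _)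
          (by positivity) (by positivity)
      have h4 : 0 ≤ CA * (1 + ‖y - x‖) ^ (-q) :=
        mul_nonneg hCA0 (Real.rpow_nonneg (by positivity) _)
      linarith
    · -- far: ‖y - x‖ ≥ m/2
      push_neg at hcase
      have hr0 : (0:ℝ) < ‖y - x‖ := lt_of_lt_of_le (by linarith) hcase
      have hsplit : (‖y - x‖^2 + 4*ε*x i*y i) ^ (-p)
          ≤ (‖y - x‖^2)^(-(q/2)) * (4*ε*x i*y i)^(-θ) := by
        rw [hpθq, neg_add]
        have := my_rpow_split (A := ‖y - x‖^2) (B := 4*ε*x i*y i)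
          (s := q/2) (t := θ) (pow_pos hr0 2) hB0 (by linarith) hθ0.le
        rw [neg_add] at this
        exact this
      have hrq : ((‖y - x‖^2 : ℝ))^(-(q/2)) = ‖y - x‖^(-q) := by
        rw [← Real.rpow_natCast ‖y - x‖ 2, ← Real.rpow_mul (norm_nonneg _)]
        congr 1; push_cast; ring
      have hBsplit : ((4*ε*x i*y i : ℝ))^(-θ) = (4*x i)^(-θ) * ε^(-θ) * (y i)^(-θ) := by
        rw [show (4*ε*x i*y i : ℝ) = (4*x i)*ε*(y i) by ring,
          Real.mul_rpow (by positivity) hy0.le, Real.mul_rpow (by positivity) hε0.le]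
      have hq4 : ‖y - x‖^(-q) ≤ (1+2/m)^q * (1 + ‖y - x‖)^(-q) := by
        have hu0 : (0:ℝ) < 1 + 2/m := by positivity
        have h2r : m ≤ 2 * ‖y - x‖ := by linarith
        have e1 : (1:ℝ) ≤ 2 * ‖y - x‖ / m := (one_le_div hm).mpr h2r
        have e2 : (1 + 2/m) * ‖y - x‖ = ‖y - x‖ + 2 * ‖y - x‖ / m := by ring
        have h1r : 1 + ‖y - x‖ ≤ (1 + 2/m) * ‖y - x‖ := by rw [e2]; linarith
        have hur : (1 + ‖y - x‖)/(1 + 2/m) ≤ ‖y - x‖ := by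
          rw [div_le_iff₀ hu0, mul_comm]; exact h1r
        have hdiv0 : (0:ℝ) < (1 + ‖y - x‖)/(1 + 2/m) := by positivity
        calc ‖y - x‖^(-q) ≤ ((1 + ‖y - x‖)/(1 + 2/m))^(-q) :=
              Real.rpow_le_rpow_of_nonpos hdiv0 hur (by linarith)
          _ = (1+2/m)^q * (1 + ‖y - x‖)^(-q) := by
              rw [Real.div_rpow (by positivity) hu0.le, Real.rpow_neg hu0.le,
                div_eq_mul_inv, inv_inv, mul_comm]
      have hδexp : a + 2 + -θ = (a+2)/2 + 1/4 := by rw [hθdef]; ring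
      have main : (y i)^(a+2) * (ε*(1-ε))^((a+2)/2) * (‖y - x‖^2 + 4*ε*x i*y i)^(-p)
          ≤ CA * (1 + ‖y - x‖)^(-q) := by
        calc (y i)^(a+2) * (ε*(1-ε))^((a+2)/2) * (‖y - x‖^2 + 4*ε*x i*y i)^(-p)
            ≤ (y i)^(a+2) * ε^((a+2)/2) *
              ((‖y - x‖^2)^(-(q/2)) * ((4*x i)^(-θ) * ε^(-θ) * (y i)^(-θ))) := by
              apply my_mul_le_mul3 le_rfl hmid (by rw [← hBsplit]; exact hsplit)
                (Real.rpow_nonneg hεε0 _) (Real.rpow_nonneg hbase0 _)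
                (Real.rpow_nonneg hy0.le _) (Real.rpow_nonneg hε0.le _)
          _ = ((y i)^(a+2) * (y i)^(-θ)) * (ε^((a+2)/2) * ε^(-θ)) * (4*x i)^(-θ)
              * (‖y - x‖^2)^(-(q/2)) := by ring
          _ = (y i)^(a+2 + -θ) * ε^((a+2)/2 + -θ) * (4*x i)^(-θ) * ‖y - x‖^(-q) := by
              rw [← Real.rpow_add hy0, ← Real.rpow_add hε0, hrq]
          _ ≤ δ^(a+2 + -θ) * 1 * (4*m)^(-θ) * ((1+2/m)^q * (1 + ‖y - x‖)^(-q)) := by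
              apply my_mul_le_mul4
              · exact Real.rpow_le_rpow hy0.le hyδ.le (by rw [hθdef]; linarith)
              · exact Real.rpow_le_one hε0.le hε1.le (by rw [hθdef]; linarith)
              · exact Real.rpow_le_rpow_of_nonpos (by positivity) (by linarith) (by linarith)
              · exact hq4
              · exact Real.rpow_nonneg hε0.le _
              · exact Real.rpow_nonneg (by positivity) _
              · exact Real.rpow_nonneg (norm_nonneg _) _
              · exact Real.rpow_nonneg hδ0.le _
              · linarith
              · exact Real.rpow_nonneg (by positivity) _
          _ = CA * (1 + ‖y - x‖)^(-q) := by rw [hCAdef, hδexp]; ring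
      have h5 : 0 ≤ CB * (‖y - x‖^2 + lam) ^ (-p) :=
        mul_nonneg hCB0 (Real.rpow_nonneg (by positivity) _)
      linarith
  -- measurability
  have m1 : Measurable fun y : EuclideanSpace ℝ (Fin n) => y i :=
    (EuclideanSpace.proj (𝕜 := ℝ) i).continuous.measurable
  have hgm : Measurable (fun y => gker a i ε x y) := by
    simp only [gker]
    have mA : Measurable fun y : EuclideanSpace ℝ (Fin n) => (y i) ^ (a+2) :=
      (by fun_prop : Measurable fun t : ℝ => t ^ (a+2)).comp m1
    have mC : Measurable fun y : EuclideanSpace ℝ (Fin n) =>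
        (‖x - y‖ ^ 2 + 4*ε*x i*y i) ^ (-(a + (n:ℝ) + 2) / 2) := by
      apply Measurable.comp (g := fun t : ℝ => t ^ (-(a + (n:ℝ) + 2) / 2)) (by fun_prop)
      exact (((continuous_const.sub continuous_id).norm.pow 2).measurable).add
        (m1.const_mul (4*ε*x i))
    exact (mA.mul measurable_const).mul mC
  have hD : MeasurableSet {y : EuclideanSpace ℝ (Fin n) | 0 < y i ∧ y i < δ} :=
    m1 measurableSet_Ioo
  have hgnonneg : ∀ y : EuclideanSpace ℝ (Fin n), 0 < y i → 0 ≤ gker a i ε x y := by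
    intro y hy0
    have hB : (0:ℝ) ≤ 4*ε*x i*y i := by positivity
    simp only [gker]
    exact mul_nonneg (mul_nonneg (Real.rpow_nonneg hy0.le _)
      (Real.rpow_nonneg (by nlinarith) _)) (Real.rpow_nonneg (by positivity) _)
  have hInt1 : Integrable (fun y : EuclideanSpace ℝ (Fin n) => (1 + ‖y - x‖)^(-q)) :=
    (integrable_one_add_norm (μ := (volume : Measure (EuclideanSpace ℝ (Fin n)))) hqn).comp_sub_right x
  have hInt2 : Integrable (fun y : EuclideanSpace ℝ (Fin n) => (‖y - x‖^2 + lam)^(-p)) :=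
    (my_integrable_sq_add hlam0 h2p).comp_sub_right x
  have hIntF : Integrable F := by
    rw [hFdef]
    exact (hInt1.const_mul CA).add (hInt2.const_mul CB)
  have hIntg : IntegrableOn (fun y => gker a i ε x y)
      {y : EuclideanSpace ℝ (Fin n) | 0 < y i ∧ y i < δ} volume := by
    refine Integrable.mono' hIntF.integrableOn hgm.aestronglyMeasurable.restrict ?_
    refine (ae_restrict_iff' hD).mpr (Filter.Eventually.of_forall fun y hy => ?_)
    rw [Real.norm_eq_abs, abs_of_nonneg (hgnonneg y hy.1)]
    exact key y hy.1 hy.2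
  have hbound : (∫ y in {y : EuclideanSpace ℝ (Fin n) | 0 < y i ∧ y i < δ},
      gker a i ε x y) ≤ CA * K + δ^(a+2) * (2*m^2) ^ (-((a+2)/2)) * J + 1 := by
    calc (∫ y in {y : EuclideanSpace ℝ (Fin n) | 0 < y i ∧ y i < δ}, gker a i ε x y)
        ≤ ∫ y in {y : EuclideanSpace ℝ (Fin n) | 0 < y i ∧ y i < δ}, F y :=
          setIntegral_mono_on hIntg hIntF.integrableOn hD (fun y hy => key y hy.1 hy.2)
      _ ≤ ∫ y, F y := setIntegral_le_integral hIntF (Filter.Eventually.of_forall hFnonneg)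
      _ = CA * K + CB * (lam ^ ((n:ℝ)/2 - p) * J) := by
          rw [hFdef]
          rw [integral_add (hInt1.const_mul CA) (hInt2.const_mul CB),
            MeasureTheory.integral_const_mul, MeasureTheory.integral_const_mul,
            integral_sub_right_eq_self (fun z : EuclideanSpace ℝ (Fin n) => (1 + ‖z‖)^(-q)) x,
            integral_sub_right_eq_self
              (fun z : EuclideanSpace ℝ (Fin n) => (‖z‖^2 + lam)^(-p)) x,
            my_integral_sq_add hlam0, ← hKdef, ← hJdef]
      _ ≤ CA * K + δ^(a+2) * (2*m^2) ^ (-((a+2)/2)) * J + 1 := by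
          have hCBlam : CB * lam ^ ((n:ℝ)/2 - p) = δ^(a+2) * (2*m^2)^(-((a+2)/2)) := by
            rw [hCBdef, hlamdef]
            have he : (n:ℝ)/2 - p = -((a+2)/2) := by rw [hpdef]; ring
            rw [he, show (2*ε*m^2 : ℝ) = ε*(2*m^2) by ring,
              Real.mul_rpow hε0.le (by positivity),
              show δ^(a+2) * ε^((a+2)/2) * (ε ^ (-((a+2)/2)) * (2*m^2) ^ (-((a+2)/2)))
                = (ε^((a+2)/2) * ε^(-((a+2)/2))) * (δ^(a+2) * (2*m^2)^(-((a+2)/2))) from by ring,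
              ← Real.rpow_add hε0]
            norm_num
          have h6 : CB * (lam ^ ((n:ℝ)/2 - p) * J)
              = δ^(a+2) * (2*m^2)^(-((a+2)/2)) * J := by
            rw [← mul_assoc, hCBlam]
          rw [h6]
          linarith
  exact ⟨hIntg, hbound⟩
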